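/- Let b ≥ 1 and s0 > b/2. There exists K0 ≥ 1, depending25 only on b and s0, and for every s ≥ s0 a constant C(s) ≥ 1 with C(s0) = 1, such that for all finite subsets B, C ⊆ ℤ^b × {0,1}, every matrix M ∈ 𝓜^B_C and every vector w : B → ℂ: ‖Mw‖_s ≤ (1/2)‖M‖_{s0}‖w‖_s + (C(s)/2)‖M‖_s‖w‖_{s0}, where for a vector w : B → ℂ one sets ‖w‖_s := (K0 · Σ_{i∈ℤ^b} (Σ_{a : (i,a)∈B} |w_{(i,a)}|²) ⟨i⟩^{2s})^{1/2} (the Sobolev norm of w, equal to the s-norm of w viewed as a one-column matrix). -/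

import Mathlib

open scoped BigOperators

namespace NLSPaper

abbrev Site (b : ℕ) := (Fin b → ℤ) × Bool

variable {b : ℕ}

/-- sup-norm of an integer vector -/
def znorm {b : ℕ} (i : Fin b → ℤ) : ℕ := Finset.univ.sup fun t => (i t).natAbs

/-- ⟨i⟩ := max(|i|,1) -/
def wt {b : ℕ} (i : Fin b → ℤ) : ℕ := max (znorm i) 1

/-- distance between sites -/
def sdist {b : ℕ} (k k' : Site b) : ℕ :=
  max (znorm (k.1 - k'.1)) (if k.2 = k'.2 then 0 else 1)

/-- Frobenius norm of the 2×2 block of `M` at spatial indices `(i,i')`,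
restricted to row set `C` and column set `B`. -/
noncomputable def blockNorm (B C : Finset (Site b)) (M : Site b → Site b → ℂ)
    (i i' : Fin b → ℤ) : NNReal :=
  NNReal.sqrt (∑ a : Bool, ∑ a' : Bool,
    if (i, a) ∈ C ∧ (i', a') ∈ B then ‖M (i, a) (i', a')‖₊ ^ 2 else 0)

/-- `[M(n)]`: max of the block norms on the `n`-th diagonal. -/
noncomputable def decayCoef (B C : Finset (Site b)) (M : Site b → Site b → ℂ)
    (n : Fin b → ℤ) : NNReal :=
  ((((C.image Prod.fst) ×ˢ (B.image Prod.fst)).filter fun p => p.1 - p.2 = n).sup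
    fun p => blockNorm B C M p.1 p.2)

/-- square of the `s`-norm of a matrix with column set `B` and row set `C` -/
noncomputable def sNormSq (K0 s : ℝ) (B C : Finset (Site b)) (M : Site b → Site b → ℂ) : ℝ :=
  K0 * ∑ n ∈ ((C.image Prod.fst) ×ˢ (B.image Prod.fst)).image (fun p => p.1 - p.2),
    (decayCoef B C M n : ℝ) ^ 2 * (wt n : ℝ) ^ (2 * s)

/-- the `s`-norm of a matrix with column set `B` and row set `C` -/
noncomputable def sNorm (K0 s : ℝ) (B C : Finset (Site b)) (M : Site b → Site b → ℂ) : ℝ :=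
  Real.sqrt (sNormSq K0 s B C M)

noncomputable def mAdd (M1 M2 : Site b → Site b → ℂ) : Site b → Site b → ℂ :=
  fun k k' => M1 k k' + M2 k k'

/-- product of matrices, relative to the middle index set `C` -/
noncomputable def mMul (C : Finset (Site b)) (M1 M2 : Site b → Site b → ℂ) : Site b → Site b → ℂ :=
  fun k k' => ∑ q ∈ C, M1 k q * M2 q k'

/-- ℓ²-operator norm of a matrix with column set `B` and row set `C` -/
noncomputable def opNorm (B C : Finset (Site b)) (M : Site b → Site b → ℂ) : ℝ :=
  ‖LinearMap.toContinuousLinearMap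
      (Matrix.toEuclideanLin
        (Matrix.of fun (k : {x // x ∈ C}) (k' : {x // x ∈ B}) => M k.1 k'.1))‖


/-- matrix-vector product: `(Mw)_k = Σ_{k'∈B} M_k^{k'} w_{k'}` -/
noncomputable def mVec (B : Finset (Site b)) (M : Site b → Site b → ℂ)
    (w : Site b → ℂ) : Site b → ℂ :=
  fun k => ∑ k' ∈ B, M k k' * w k'

/-- square of the Sobolev norm of a vector supported on `B` -/
noncomputable def vNormSq (K0 s : ℝ) (B : Finset (Site b)) (w : Site b → ℂ) : ℝ :=
  K0 * ∑ i ∈ B.image Prod.fst,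
    (∑ a : Bool, if (i, a) ∈ B then ‖w (i, a)‖ ^ 2 else 0) * (wt i : ℝ) ^ (2 * s)

noncomputable def vNorm (K0 s : ℝ) (B : Finset (Site b)) (w : Site b → ℂ) : ℝ :=
  Real.sqrt (vNormSq K0 s B w)

/-! ### Auxiliary lemmas for the proof of `sNorm_sobolev` -/

section GenHelpers
variable {ι : Type*}

/-- two-term Minkowski inequality for finite ℓ² sums -/
lemma sqrt_sum_sq_add_le (I : Finset ι) (x y : ι → ℝ) :
    Real.sqrt (∑ i ∈ I, (x i + y i)^2) ≤
      Real.sqrt (∑ i ∈ I, (x i)^2) + Real.sqrt (∑ i ∈ I, (y i)^2) := by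
  set X := Real.sqrt (∑ i ∈ I, (x i)^2) with hX
  set Y := Real.sqrt (∑ i ∈ I, (y i)^2) with hY
  set Z := Real.sqrt (∑ i ∈ I, (x i + y i)^2) with hZ
  have hZ0 : 0 ≤ Z := Real.sqrt_nonneg _
  have hX0 : 0 ≤ X := Real.sqrt_nonneg _
  have hY0 : 0 ≤ Y := Real.sqrt_nonneg _
  have hZ2 : Z^2 = ∑ i ∈ I, (x i + y i)^2 :=
    Real.sq_sqrt (Finset.sum_nonneg fun i _ => sq_nonneg _)
  have h1 : ∑ i ∈ I, x i * (x i + y i) ≤ X * Z := by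
    simpa [hX, hZ] using Real.sum_mul_le_sqrt_mul_sqrt I x (fun i => x i + y i)
  have h2 : ∑ i ∈ I, y i * (x i + y i) ≤ Y * Z := by
    simpa [hY, hZ] using Real.sum_mul_le_sqrt_mul_sqrt I y (fun i => x i + y i)
  have hsplit : Z^2 = (∑ i ∈ I, x i * (x i + y i)) + ∑ i ∈ I, y i * (x i + y i) := by
    rw [hZ2, ← Finset.sum_add_distrib]; apply Finset.sum_congr rfl; intro i _; ring
  have hq : Z^2 ≤ (X + Y) * Z := by rw [hsplit]; nlinarith
  rcases eq_or_lt_of_le hZ0 with h | h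
  · rw [← h]; positivity
  · have := (mul_le_mul_iff_of_pos_right h).1 (by nlinarith : Z * Z ≤ (X + Y) * Z)
    linarith

variable [DecidableEq ι] [AddCommGroup ι]

lemma conv_l2_l1 (I J : Finset ι) (a d : ι → ℝ) (ha : ∀ n, 0 ≤ a n)
    (L : ℝ) (hL : 0 ≤ L) (hI : ∀ i ∈ I, ∑ j ∈ J, a (i - j) ≤ L)
    (hJ : ∀ j ∈ J, ∑ i ∈ I, a (i - j) ≤ L) :
    ∑ i ∈ I, (∑ j ∈ J, a (i - j) * d j)^2 ≤ L^2 * ∑ j ∈ J, (d j)^2 := by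
  have key : ∀ i ∈ I, (∑ j ∈ J, a (i - j) * d j)^2 ≤ L * ∑ j ∈ J, a (i - j) * (d j)^2 := by
    intro i hi
    have cs := Finset.sum_mul_sq_le_sq_mul_sq J (fun j => Real.sqrt (a (i - j)))
      (fun j => Real.sqrt (a (i - j)) * d j)
    have e1 : ∀ j, Real.sqrt (a (i - j)) * (Real.sqrt (a (i - j)) * d j) = a (i - j) * d j := by
      intro j; rw [← mul_assoc, Real.mul_self_sqrt (ha _)]
    have e2 : ∀ j, Real.sqrt (a (i - j)) ^ 2 = a (i - j) := fun j => Real.sq_sqrt (ha _)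
    have e3 : ∀ j, (Real.sqrt (a (i - j)) * d j) ^ 2 = a (i - j) * (d j)^2 := by
      intro j; rw [mul_pow, e2]
    simp only [e1, e2, e3] at cs
    calc (∑ j ∈ J, a (i - j) * d j)^2
        ≤ (∑ j ∈ J, a (i - j)) * ∑ j ∈ J, a (i - j) * (d j)^2 := cs
      _ ≤ L * ∑ j ∈ J, a (i - j) * (d j)^2 := by
          apply mul_le_mul_of_nonneg_right (hI i hi)
          exact Finset.sum_nonneg fun j _ => mul_nonneg (ha _) (sq_nonneg _)
  calc ∑ i ∈ I, (∑ j ∈ J, a (i - j) * d j)^2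
      ≤ ∑ i ∈ I, L * ∑ j ∈ J, a (i - j) * (d j)^2 := Finset.sum_le_sum key
    _ = L * ∑ j ∈ J, (d j)^2 * ∑ i ∈ I, a (i - j) := by
        rw [← Finset.mul_sum, Finset.sum_comm]
        congr 1; apply Finset.sum_congr rfl; intro j _
        rw [Finset.mul_sum]
        apply Finset.sum_congr rfl; intro i _; ring
    _ ≤ L * ∑ j ∈ J, (d j)^2 * L := by
        apply mul_le_mul_of_nonneg_left _ hL
        apply Finset.sum_le_sum; intro j hj
        exact mul_le_mul_of_nonneg_left (hJ j hj) (sq_nonneg _)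
    _ = L^2 * ∑ j ∈ J, (d j)^2 := by rw [← Finset.sum_mul]; ring

lemma conv_l1_l2 (I J : Finset ι) (e f : ι → ℝ) (hf : ∀ j, 0 ≤ f j)
    (F E : ℝ) (hF0 : 0 ≤ F) (hE0 : 0 ≤ E) (hF : ∑ j ∈ J, f j ≤ F)
    (hE : ∀ j ∈ J, ∑ i ∈ I, (e (i - j))^2 ≤ E) :
    ∑ i ∈ I, (∑ j ∈ J, e (i - j) * f j)^2 ≤ F^2 * E := by
  have key : ∀ i ∈ I, (∑ j ∈ J, e (i - j) * f j)^2 ≤ F * ∑ j ∈ J, f j * (e (i - j))^2 := by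
    intro i _
    have cs := Finset.sum_mul_sq_le_sq_mul_sq J (fun j => Real.sqrt (f j))
      (fun j => Real.sqrt (f j) * e (i - j))
    have e1 : ∀ j, Real.sqrt (f j) * (Real.sqrt (f j) * e (i - j)) = e (i - j) * f j := by
      intro j; rw [← mul_assoc, Real.mul_self_sqrt (hf _)]; ring
    have e2 : ∀ j, Real.sqrt (f j) ^ 2 = f j := fun j => Real.sq_sqrt (hf _)
    have e3 : ∀ j, (Real.sqrt (f j) * e (i - j)) ^ 2 = f j * (e (i - j))^2 := by
      intro j; rw [mul_pow, e2]
    simp only [e1, e2, e3] at cs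
    calc (∑ j ∈ J, e (i - j) * f j)^2
        ≤ (∑ j ∈ J, f j) * ∑ j ∈ J, f j * (e (i - j))^2 := cs
      _ ≤ F * ∑ j ∈ J, f j * (e (i - j))^2 := by
          apply mul_le_mul_of_nonneg_right hF
          exact Finset.sum_nonneg fun j _ => mul_nonneg (hf _) (sq_nonneg _)
  calc ∑ i ∈ I, (∑ j ∈ J, e (i - j) * f j)^2
      ≤ ∑ i ∈ I, F * ∑ j ∈ J, f j * (e (i - j))^2 := Finset.sum_le_sum key
    _ = F * ∑ j ∈ J, f j * ∑ i ∈ I, (e (i - j))^2 := by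
        rw [← Finset.mul_sum, Finset.sum_comm]
        congr 1; apply Finset.sum_congr rfl; intro j _
        rw [Finset.mul_sum]
    _ ≤ F * ∑ j ∈ J, f j * E := by
        apply mul_le_mul_of_nonneg_left _ hF0
        apply Finset.sum_le_sum; intro j hj
        exact mul_le_mul_of_nonneg_left (hE j hj) (hf _)
    _ ≤ F^2 * E := by
        rw [← Finset.sum_mul]
        have : (∑ j ∈ J, f j) * E ≤ F * E := mul_le_mul_of_nonneg_right hF hE0
        nlinarith

lemma sum_shift_left (PC PB D : Finset ι)
    (hD : ∀ i ∈ PC, ∀ j ∈ PB, i - j ∈ D) (φ : ι → ℝ) (hφ : ∀ n, 0 ≤ φ n)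
    (i : ι) (hi : i ∈ PC) : ∑ j ∈ PB, φ (i - j) ≤ ∑ n ∈ D, φ n := by
  have e : ∑ j ∈ PB, φ (i - j) = ∑ n ∈ PB.image (fun j => i - j), φ n := by
    rw [Finset.sum_image]
    intro x _ y _ h
    exact sub_right_injective h
  rw [e]
  apply Finset.sum_le_sum_of_subset_of_nonneg
  · intro n hn
    rcases Finset.mem_image.1 hn with ⟨j, hj, rfl⟩
    exact hD i hi j hj
  · intro n _ _; exact hφ n

lemma sum_shift_right (PC PB D : Finset ι)
    (hD : ∀ i ∈ PC, ∀ j ∈ PB, i - j ∈ D) (φ : ι → ℝ) (hφ : ∀ n, 0 ≤ φ n)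
    (j : ι) (hj : j ∈ PB) : ∑ i ∈ PC, φ (i - j) ≤ ∑ n ∈ D, φ n := by
  have e : ∑ i ∈ PC, φ (i - j) = ∑ n ∈ PC.image (fun i => i - j), φ n := by
    rw [Finset.sum_image]
    intro x _ y _ h
    exact sub_left_injective h
  rw [e]
  apply Finset.sum_le_sum_of_subset_of_nonneg
  · intro n hn
    rcases Finset.mem_image.1 hn with ⟨i, hi, rfl⟩
    exact hD i hi j hj
  · intro n _ _; exact hφ n

end GenHelpers

lemma rpow_sq {x : ℝ} (hx : 0 ≤ x) (r : ℝ) : (x ^ r)^2 = x ^ (2*r) := by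
  rw [← Real.rpow_natCast (x ^ r) 2, ← Real.rpow_mul hx]
  congr 1
  push_cast
  ring

/-! #### weight lemmas -/

lemma one_le_wt (i : Fin b → ℤ) : 1 ≤ wt i := le_max_right _ _

lemma one_le_wtR (i : Fin b → ℤ) : (1:ℝ) ≤ (wt i : ℝ) := by
  exact_mod_cast one_le_wt i

lemma wt_pos (i : Fin b → ℤ) : (0:ℝ) < (wt i : ℝ) := lt_of_lt_of_le one_pos (one_le_wtR i)

lemma wt_triangle (i i' : Fin b → ℤ) : wt i ≤ wt (i - i') + wt i' := by
  unfold wt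
  apply max_le
  · have : znorm i ≤ znorm (i - i') + znorm i' := by
      unfold znorm
      apply Finset.sup_le
      intro t _
      have : i t = (i - i') t + i' t := by simp
      rw [this]
      calc ((i - i') t + i' t).natAbs ≤ ((i - i') t).natAbs + (i' t).natAbs :=
            Int.natAbs_add_le _ _
        _ ≤ _ := add_le_add
            (Finset.le_sup (f := fun t => ((i - i') t).natAbs) (Finset.mem_univ t))
            (Finset.le_sup (f := fun t => (i' t).natAbs) (Finset.mem_univ t))
    calc znorm i ≤ znorm (i - i') + znorm i' := this
      _ ≤ _ := add_le_add (le_max_left _ _) (le_max_left _ _)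
  · calc 1 ≤ 1 + 1 := by norm_num
      _ ≤ _ := add_le_add (le_max_right _ _) (le_max_right _ _)

lemma wt_coord (n : Fin b → ℤ) (t : Fin b) : max (n t).natAbs 1 ≤ wt n := by
  unfold wt
  exact max_le_max (Finset.le_sup (f := fun t => (n t).natAbs) (Finset.mem_univ t)) le_rfl

lemma wt_interp {s0 s : ℝ} (hs0 : 0 < s0) (hs : s0 ≤ s) (i i' : Fin b → ℤ) :
    (wt i : ℝ) ^ s ≤ 3 * (wt i' : ℝ) ^ s
      + (1 + s) ^ s * (wt (i - i') : ℝ) ^ s := by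
  set W : ℝ := (wt i : ℝ) with hW
  set N : ℝ := (wt (i - i') : ℝ) with hN
  set V : ℝ := (wt i' : ℝ) with hV
  have h1W : 1 ≤ W := one_le_wtR i
  have h1N : 1 ≤ N := one_le_wtR _
  have h1V : 1 ≤ V := one_le_wtR i'
  have hsp : 0 < s := lt_of_lt_of_le hs0 hs
  have htri : W ≤ N + V := by
    have := wt_triangle i i'
    rw [hW, hN, hV]
    exact_mod_cast this
  have hterm2 : 0 ≤ (1 + s) ^ s * N ^ s := by positivity
  have hterm1 : 0 ≤ 3 * V ^ s := by positivity
  rcases le_or_gt V (s * N) with hc | hc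
  · have hWb : W ≤ (1 + s) * N := by nlinarith
    have h0 : W ^ s ≤ ((1 + s) * N) ^ s :=
      Real.rpow_le_rpow (by linarith) hWb (le_of_lt hsp)
    have e : ((1 + s) * N) ^ s = (1 + s) ^ s * N ^ s :=
      Real.mul_rpow (by linarith) (by linarith)
    have : W ^ s ≤ (1 + s) ^ s * N ^ s := by rw [← e]; exact h0
    linarith
  · have hVp : (0:ℝ) < V := by linarith
    have hx0 : (0:ℝ) ≤ N / V := by positivity
    have hWb : W ≤ V * (1 + N / V) := by
      rw [mul_add, mul_one, mul_div_cancel₀ _ (ne_of_gt hVp)]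
      linarith
    have h1 : W ^ s ≤ (V * (1 + N / V)) ^ s :=
      Real.rpow_le_rpow (by linarith) hWb (le_of_lt hsp)
    have e : (V * (1 + N / V)) ^ s = V ^ s * (1 + N / V) ^ s :=
      Real.mul_rpow (le_of_lt hVp) (by linarith)
    have h2 : (1 + N / V) ^ s ≤ 3 := by
      rw [Real.rpow_def_of_pos (by linarith)]
      have hlog : Real.log (1 + N / V) ≤ N / V := by
        have := Real.log_le_sub_one_of_pos (show (0:ℝ) < 1 + N / V by linarith)
        linarith
      have hmul : Real.log (1 + N / V) * s ≤ 1 := by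
        have hNV : N / V * s ≤ 1 := by
          rw [div_mul_eq_mul_div, mul_comm]
          rw [div_le_one hVp]
          linarith
        calc Real.log (1 + N / V) * s ≤ N / V * s :=
              mul_le_mul_of_nonneg_right hlog (le_of_lt hsp)
          _ ≤ 1 := hNV
      calc Real.exp (Real.log (1 + N / V) * s) ≤ Real.exp 1 := Real.exp_le_exp.2 hmul
        _ ≤ 3 := by
            have := Real.exp_one_lt_d9
            linarith
    have h3 : W ^ s ≤ 3 * V ^ s := by
      calc W ^ s ≤ V ^ s * (1 + N / V) ^ s := by rw [← e]; exact h1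
        _ ≤ V ^ s * 3 := mul_le_mul_of_nonneg_left h2 (by positivity)
        _ = 3 * V ^ s := by ring
    linarith

/-! #### summability of the weights -/

lemma one_dim_bound (p : ℝ) (hp : 1 < p) :
    ∃ S1 : ℝ, 1 ≤ S1 ∧ ∀ G : Finset ℤ, ∑ m ∈ G, ((max m.natAbs 1 : ℕ) : ℝ) ^ (-p) ≤ S1 := by
  set g : ℤ → ℝ := fun m => ((max m.natAbs 1 : ℕ) : ℝ) ^ (-p) with hg
  have hg0 : ∀ m, 0 ≤ g m := by
    intro m; apply Real.rpow_nonneg; positivity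
  have hnat : Summable (fun n : ℕ => g n) := by
    have h1 : Summable (fun n : ℕ => ((n : ℝ) + 1) ^ (-p)) := by
      have := (Real.summable_nat_rpow (p := -p)).2 (by linarith)
      have h2 := (summable_nat_add_iff (f := fun n : ℕ => (n : ℝ) ^ (-p)) 1).2 this
      apply h2.congr
      intro n; push_cast; ring_nf
    have h2 : (fun n : ℕ => g (n + 1 : ℕ)) = fun n : ℕ => ((n : ℝ) + 1) ^ (-p) := by
      funext n
      simp only [hg]
      have e1 : ((n + 1 : ℕ) : ℤ).natAbs = n + 1 := Int.natAbs_natCast _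
      rw [e1]
      have e2 : max (n + 1) 1 = n + 1 := Nat.max_eq_left (by omega)
      rw [e2]
      push_cast; ring_nf
    exact (summable_nat_add_iff 1).1 (h2 ▸ h1)
  have hneg : Summable (fun n : ℕ => g (-n)) := by
    apply hnat.congr; intro n; simp [hg]
  have hsum : Summable g := Summable.of_nat_of_neg hnat hneg
  refine ⟨max 1 (∑' m, g m), le_max_left _ _, ?_⟩
  intro G
  calc ∑ m ∈ G, g m ≤ ∑' m, g m := Summable.sum_le_tsum G (fun m _ => hg0 m) hsum
    _ ≤ _ := le_max_right _ _

lemma exists_S (b : ℕ) (hb : 1 ≤ b) (s0 : ℝ) (hs0 : (b : ℝ) / 2 < s0) :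
    ∃ S : ℝ, 1 ≤ S ∧ ∀ D : Finset (Fin b → ℤ), ∑ n ∈ D, ((wt n : ℝ)) ^ (-(2 * s0)) ≤ S := by
  have hb0 : (0:ℝ) < b := by exact_mod_cast hb
  set p : ℝ := 2 * s0 / b with hp'
  have hp : 1 < p := by
    rw [hp', lt_div_iff₀ hb0]; linarith
  obtain ⟨S1, hS1, hS1b⟩ := one_dim_bound p hp
  refine ⟨S1 ^ b, one_le_pow₀ hS1, ?_⟩
  intro D
  set g : ℤ → ℝ := fun m => ((max m.natAbs 1 : ℕ) : ℝ) ^ (-p) with hg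
  have hg0 : ∀ m, 0 ≤ g m := fun m => Real.rpow_nonneg (by positivity) _
  set G : Finset ℤ := D.biUnion (fun n => Finset.image n Finset.univ) with hG
  have hsub : D ⊆ Fintype.piFinset (fun _ : Fin b => G) := by
    intro n hn
    rw [Fintype.mem_piFinset]
    intro t
    exact Finset.mem_biUnion.2 ⟨n, hn, Finset.mem_image.2 ⟨t, Finset.mem_univ t, rfl⟩⟩
  have point : ∀ n : Fin b → ℤ, ((wt n : ℝ)) ^ (-(2 * s0)) ≤ ∏ t : Fin b, g (n t) := by
    intro n
    have e1 : ((wt n : ℝ)) ^ (-(2 * s0)) = ∏ _t : Fin b, ((wt n : ℝ)) ^ (-p) := by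
      rw [Finset.prod_const, Finset.card_univ, Fintype.card_fin,
        ← Real.rpow_natCast ((wt n : ℝ) ^ (-p)) b, ← Real.rpow_mul (le_of_lt (wt_pos n))]
      congr 1
      rw [hp']; field_simp
    rw [e1]
    apply Finset.prod_le_prod
    · intro t _; exact Real.rpow_nonneg (le_of_lt (wt_pos n)) _
    · intro t _
      show (wt n : ℝ) ^ (-p) ≤ ((max (n t).natAbs 1 : ℕ) : ℝ) ^ (-p)
      have hbase : ((max (n t).natAbs 1 : ℕ) : ℝ) ≤ (wt n : ℝ) := by
        exact_mod_cast wt_coord n t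
      have hbase0 : (0:ℝ) < ((max (n t).natAbs 1 : ℕ) : ℝ) := by positivity
      rw [Real.rpow_neg (le_of_lt (wt_pos n)), Real.rpow_neg (le_of_lt hbase0)]
      apply inv_anti₀ (Real.rpow_pos_of_pos hbase0 p)
      exact Real.rpow_le_rpow (le_of_lt hbase0) hbase (by linarith)
  calc ∑ n ∈ D, ((wt n : ℝ)) ^ (-(2 * s0))
      ≤ ∑ n ∈ D, ∏ t : Fin b, g (n t) := Finset.sum_le_sum fun n _ => point n
    _ ≤ ∑ n ∈ Fintype.piFinset (fun _ : Fin b => G), ∏ t : Fin b, g (n t) := by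
        apply Finset.sum_le_sum_of_subset_of_nonneg hsub
        intro n _ _
        exact Finset.prod_nonneg fun t _ => hg0 _
    _ = ∏ _t : Fin b, ∑ m ∈ G, g m := (Finset.prod_univ_sum _ _).symm
    _ = (∑ m ∈ G, g m) ^ b := by rw [Finset.prod_const, Finset.card_univ, Fintype.card_fin]
    _ ≤ S1 ^ b := by
        apply pow_le_pow_left₀ (Finset.sum_nonneg fun m _ => hg0 m) (hS1b G)

/-- ℓ¹-to-weighted-ℓ² Cauchy–Schwarz bound -/
lemma l1_bound (s0 S : ℝ)
    (hSb : ∀ D : Finset (Fin b → ℤ), ∑ n ∈ D, ((wt n : ℝ)) ^ (-(2 * s0)) ≤ S)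
    (D : Finset (Fin b → ℤ)) (φ : (Fin b → ℤ) → ℝ) (hφ : ∀ n, 0 ≤ φ n) :
    ∑ n ∈ D, φ n ≤ Real.sqrt S * Real.sqrt (∑ n ∈ D, (φ n * (wt n : ℝ) ^ s0)^2) := by
  have key : ∀ n : Fin b → ℤ, φ n = (wt n : ℝ) ^ (-s0) * (φ n * (wt n : ℝ) ^ s0) := by
    intro n
    have : (wt n : ℝ) ^ (-s0) * (wt n : ℝ) ^ s0 = 1 := by
      rw [← Real.rpow_add (wt_pos n)]
      norm_num
    calc φ n = ((wt n : ℝ) ^ (-s0) * (wt n : ℝ) ^ s0) * φ n := by rw [this, one_mul]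
      _ = (wt n : ℝ) ^ (-s0) * (φ n * (wt n : ℝ) ^ s0) := by ring
  have e0 : ∑ n ∈ D, φ n = ∑ n ∈ D, (wt n : ℝ) ^ (-s0) * (φ n * (wt n : ℝ) ^ s0) :=
    Finset.sum_congr rfl fun n _ => key n
  have cs := Real.sum_mul_le_sqrt_mul_sqrt D (fun n => (wt n : ℝ) ^ (-s0))
    (fun n => φ n * (wt n : ℝ) ^ s0)
  have e1 : ∑ n ∈ D, ((wt n : ℝ) ^ (-s0))^2 = ∑ n ∈ D, ((wt n : ℝ)) ^ (-(2 * s0)) := by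
    apply Finset.sum_congr rfl
    intro n _
    rw [rpow_sq (le_of_lt (wt_pos n))]
    congr 1; ring
  have h2 : Real.sqrt (∑ n ∈ D, ((wt n : ℝ) ^ (-s0))^2) ≤ Real.sqrt S := by
    apply Real.sqrt_le_sqrt
    rw [e1]; exact hSb D
  calc ∑ n ∈ D, φ n
      = ∑ n ∈ D, (wt n : ℝ) ^ (-s0) * (φ n * (wt n : ℝ) ^ s0) := e0
    _ ≤ Real.sqrt (∑ n ∈ D, ((wt n : ℝ) ^ (-s0))^2)
        * Real.sqrt (∑ n ∈ D, (φ n * (wt n : ℝ) ^ s0)^2) := cs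
    _ ≤ Real.sqrt S * Real.sqrt (∑ n ∈ D, (φ n * (wt n : ℝ) ^ s0)^2) :=
        mul_le_mul_of_nonneg_right h2 (Real.sqrt_nonneg _)

/-! #### the pointwise block estimate -/

/-- the ℓ² mass of a vector at spatial index `i'` -/
noncomputable def omg (B : Finset (Site b)) (w : Site b → ℂ) (i' : Fin b → ℤ) : ℝ :=
  Real.sqrt (∑ a' : Bool, if (i', a') ∈ B then ‖w (i', a')‖^2 else 0)

lemma omg_nonneg (B : Finset (Site b)) (w : Site b → ℂ) (i' : Fin b → ℤ) :
    0 ≤ omg B w i' := Real.sqrt_nonneg _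

lemma omg_sq (B : Finset (Site b)) (w : Site b → ℂ) (i' : Fin b → ℤ) :
    omg B w i' ^ 2 = ∑ a' : Bool, if (i', a') ∈ B then ‖w (i', a')‖^2 else 0 := by
  apply Real.sq_sqrt
  apply Finset.sum_nonneg
  intro a' _
  split_ifs
  · positivity
  · exact le_rfl

/-- fiberwise decomposition of a sum over a finite set of sites -/
lemma fiber_sum (B : Finset (Site b)) (F : Site b → ℂ) :
    ∑ k' ∈ B, F k' = ∑ i' ∈ B.image Prod.fst, ∑ a' : Bool,
      if (i', a') ∈ B then F (i', a') else 0 := by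
  rw [← Finset.sum_fiberwise_of_maps_to (fun x hx => Finset.mem_image_of_mem Prod.fst hx) F]
  apply Finset.sum_congr rfl
  intro i' _
  rw [← Finset.sum_filter]
  apply Finset.sum_bij' (fun (k' : Site b) (_ : k' ∈ B.filter (fun x => x.1 = i')) => k'.2)
    (fun (a' : Bool) (_ : a' ∈ Finset.univ.filter (fun a' => (i', a') ∈ B)) => ((i', a') : Site b))
  · intro k' hk'
    rcases Finset.mem_filter.1 hk' with ⟨hB, hfst⟩
    simp only [Finset.mem_filter, Finset.mem_univ, true_and]
    rw [show ((i', k'.2) : Site b) = k' from Prod.ext hfst.symm rfl]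
    exact hB
  · intro a' ha'
    rcases Finset.mem_filter.1 ha' with ⟨_, hB⟩
    exact Finset.mem_filter.2 ⟨hB, rfl⟩
  · intro k' hk'
    rcases Finset.mem_filter.1 hk' with ⟨_, hfst⟩
    exact Prod.ext hfst.symm rfl
  · intro a' _
    rfl
  · intro k' hk'
    rcases Finset.mem_filter.1 hk' with ⟨_, hfst⟩
    rw [show ((i', k'.2) : Site b) = k' from Prod.ext hfst.symm rfl]

set_option maxHeartbeats 1000000 in
lemma step1 (B C : Finset (Site b)) (M : Site b → Site b → ℂ) (w : Site b → ℂ)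
    (i : Fin b → ℤ) (hi : i ∈ C.image Prod.fst) :
    omg C (mVec B M w) i
      ≤ ∑ i' ∈ B.image Prod.fst, (decayCoef B C M (i - i') : ℝ) * omg B w i' := by
  classical
  set PB := B.image Prod.fst with hPB
  set v : (Fin b → ℤ) → EuclideanSpace ℂ Bool := fun i' => WithLp.toLp 2 (fun a =>
    if (i, a) ∈ C then (∑ a' : Bool, if (i', a') ∈ B then M (i, a) (i', a') * w (i', a') else 0)
    else 0) with hv
  have happ : ∀ a : Bool, (∑ i' ∈ PB, v i') a = ∑ i' ∈ PB, v i' a := by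
    intro a
    simp only [WithLp.ofLp_sum, Finset.sum_apply]
  have hnorm : omg C (mVec B M w) i = ‖∑ i' ∈ PB, v i'‖ := by
    rw [omg, EuclideanSpace.norm_eq]
    congr 1
    apply Finset.sum_congr rfl
    intro a _
    rw [happ a]
    by_cases h : (i, a) ∈ C
    · simp only [h, if_true, hv, WithLp.ofLp_toLp]
      congr 1
      rw [mVec, fiber_sum B (fun k' => M (i, a) k' * w k')]
    · simp only [h, if_false, hv, WithLp.ofLp_toLp]
      rw [Finset.sum_const_zero]
      simp
  rw [hnorm]
  calc ‖∑ i' ∈ PB, v i'‖ ≤ ∑ i' ∈ PB, ‖v i'‖ := norm_sum_le _ _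
    _ ≤ ∑ i' ∈ PB, (decayCoef B C M (i - i') : ℝ) * omg B w i' := by
        apply Finset.sum_le_sum
        intro i' hi'
        have hblock : ‖v i'‖ ≤ (blockNorm B C M i i' : ℝ) * omg B w i' := by
          rw [EuclideanSpace.norm_eq]
          have hpoint : ∀ a : Bool, ‖v i' a‖^2 ≤
              (∑ a' : Bool, if (i, a) ∈ C ∧ (i', a') ∈ B then ‖M (i, a) (i', a')‖^2 else 0)
                * omg B w i' ^ 2 := by
            intro a
            by_cases h : (i, a) ∈ C
            · have hcond : ∀ a' : Bool, (if (i, a) ∈ C ∧ (i', a') ∈ B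
                  then ‖M (i, a) (i', a')‖^2 else 0)
                  = if (i', a') ∈ B then ‖M (i, a) (i', a')‖^2 else 0 := by
                intro a'; simp [h]
              have hva : v i' a = ∑ a' : Bool,
                  if (i', a') ∈ B then M (i, a) (i', a') * w (i', a') else 0 := by
                simp only [hv, WithLp.ofLp_toLp]
                rw [if_pos h]
              rw [hva]
              simp only [hcond]
              have tri : ‖∑ a' : Bool, if (i', a') ∈ B then M (i, a) (i', a') * w (i', a') else 0‖
                  ≤ ∑ a' : Bool, (if (i', a') ∈ B then ‖M (i, a) (i', a')‖ else 0)
                      * (if (i', a') ∈ B then ‖w (i', a')‖ else 0) := by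
                refine (norm_sum_le _ _).trans ?_
                apply Finset.sum_le_sum
                intro a' _
                split_ifs with h'
                · rw [norm_mul]
                · simp
              have cs := Finset.sum_mul_sq_le_sq_mul_sq Finset.univ
                (fun a' : Bool => if (i', a') ∈ B then ‖M (i, a) (i', a')‖ else 0)
                (fun a' : Bool => if (i', a') ∈ B then ‖w (i', a')‖ else 0)
              have e1 : ∀ a' : Bool, (if (i', a') ∈ B then ‖M (i, a) (i', a')‖ else 0)^2
                  = (if (i', a') ∈ B then ‖M (i, a) (i', a')‖^2 else 0) := by
                intro a'; split_ifs <;> simp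
              have e2 : ∀ a' : Bool, (if (i', a') ∈ B then ‖w (i', a')‖ else 0)^2
                  = (if (i', a') ∈ B then ‖w (i', a')‖^2 else 0) := by
                intro a'; split_ifs <;> simp
              simp only [e1, e2] at cs
              calc ‖∑ a' : Bool, if (i', a') ∈ B then M (i, a) (i', a') * w (i', a') else 0‖^2
                  ≤ (∑ a' : Bool, (if (i', a') ∈ B then ‖M (i, a) (i', a')‖ else 0)
                      * (if (i', a') ∈ B then ‖w (i', a')‖ else 0))^2 := by
                    apply pow_le_pow_left₀ (norm_nonneg _) tri
                _ ≤ (∑ a' : Bool, if (i', a') ∈ B then ‖M (i, a) (i', a')‖^2 else 0)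
                    * ∑ a' : Bool, if (i', a') ∈ B then ‖w (i', a')‖^2 else 0 := cs
                _ = (∑ a' : Bool, if (i', a') ∈ B then ‖M (i, a) (i', a')‖^2 else 0)
                    * omg B w i' ^ 2 := by rw [omg_sq]
            · have hcond : ∀ a' : Bool, (if (i, a) ∈ C ∧ (i', a') ∈ B
                  then ‖M (i, a) (i', a')‖^2 else 0) = 0 := by
                intro a'; simp [h]
              have hva : v i' a = 0 := by
                simp only [hv, WithLp.ofLp_toLp]
                rw [if_neg h]
              rw [hva]
              simp only [hcond]
              rw [Finset.sum_const_zero, zero_mul]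
              simp
          have hsum : ∑ a : Bool, ‖v i' a‖^2
              ≤ ((blockNorm B C M i i' : ℝ))^2 * omg B w i' ^2 := by
            calc ∑ a : Bool, ‖v i' a‖^2
                ≤ ∑ a : Bool, (∑ a' : Bool, if (i, a) ∈ C ∧ (i', a') ∈ B
                    then ‖M (i, a) (i', a')‖^2 else 0) * omg B w i' ^ 2 :=
                  Finset.sum_le_sum fun a _ => hpoint a
              _ = (∑ a : Bool, ∑ a' : Bool, if (i, a) ∈ C ∧ (i', a') ∈ B
                    then ‖M (i, a) (i', a')‖^2 else 0) * omg B w i' ^ 2 := by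
                  rw [Finset.sum_mul]
              _ = ((blockNorm B C M i i' : ℝ))^2 * omg B w i' ^2 := by
                  congr 1
                  rw [blockNorm]
                  rw [Real.coe_sqrt]
                  rw [Real.sq_sqrt]
                  · push_cast
                    apply Finset.sum_congr rfl
                    intro a _
                    apply Finset.sum_congr rfl
                    intro a' _
                    split_ifs <;> simp
                  · positivity
          calc Real.sqrt (∑ a : Bool, ‖v i' a‖^2)
              ≤ Real.sqrt (((blockNorm B C M i i' : ℝ))^2 * omg B w i' ^2) :=
                Real.sqrt_le_sqrt hsum
            _ = (blockNorm B C M i i' : ℝ) * omg B w i' := by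
                rw [← mul_pow]
                exact Real.sqrt_sq (mul_nonneg (blockNorm B C M i i').coe_nonneg
                  (omg_nonneg B w i'))
        refine hblock.trans ?_
        apply mul_le_mul_of_nonneg_right _ (omg_nonneg B w i')
        have key : ∀ p : (Fin b → ℤ) × (Fin b → ℤ),
            p ∈ (((C.image Prod.fst) ×ˢ (B.image Prod.fst)).filter
              fun p => p.1 - p.2 = i - i') →
            blockNorm B C M p.1 p.2 ≤ decayCoef B C M (i - i') :=
          fun p hp => Finset.le_sup
            (f := fun p : (Fin b → ℤ) × (Fin b → ℤ) => blockNorm B C M p.1 p.2) hp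
        have : blockNorm B C M i i' ≤ decayCoef B C M (i - i') :=
          key (i, i') (Finset.mem_filter.2 ⟨Finset.mem_product.2 ⟨hi, hi'⟩, rfl⟩)
        exact_mod_cast this

/-! #### norm reformulations -/

lemma vNorm_eq (K0 s : ℝ) (hK0 : 0 ≤ K0) (B : Finset (Site b)) (w : Site b → ℂ) :
    vNorm K0 s B w = Real.sqrt K0
      * Real.sqrt (∑ i ∈ B.image Prod.fst, (omg B w i * (wt i : ℝ) ^ s)^2) := by
  rw [vNorm, vNormSq, Real.sqrt_mul hK0]
  congr 2
  apply Finset.sum_congr rfl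
  intro i _
  rw [mul_pow, omg_sq, rpow_sq (le_of_lt (wt_pos i))]

lemma sNorm_eq (K0 s : ℝ) (hK0 : 0 ≤ K0) (B C : Finset (Site b)) (M : Site b → Site b → ℂ) :
    sNorm K0 s B C M = Real.sqrt K0
      * Real.sqrt (∑ n ∈ ((C.image Prod.fst) ×ˢ (B.image Prod.fst)).image
            (fun p => p.1 - p.2),
          ((decayCoef B C M n : ℝ) * (wt n : ℝ) ^ s)^2) := by
  rw [sNorm, sNormSq, Real.sqrt_mul hK0]
  congr 2
  apply Finset.sum_congr rfl
  intro n _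
  rw [mul_pow, rpow_sq (le_of_lt (wt_pos n))]

/-- Sobolev norm of `Mw` interpolation estimate (Lemma 3.6). -/
theorem sNorm_sobolev
    (b : ℕ) (hb : 1 ≤ b) (s0 : ℝ) (hs0 : (b : ℝ) / 2 < s0) :
    ∃ K0 : ℝ, 1 ≤ K0 ∧ ∃ Cc : ℝ → ℝ,
      Cc s0 = 1 ∧ (∀ s, s0 ≤ s → 1 ≤ Cc s) ∧
      ∀ s, s0 ≤ s → ∀ (B C : Finset (Site b)) (M : Site b → Site b → ℂ)
        (w : Site b → ℂ),
        vNorm K0 s C (mVec B M w) ≤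
          (1 / 2) * sNorm K0 s0 B C M * vNorm K0 s B w
            + (Cc s / 2) * sNorm K0 s B C M * vNorm K0 s0 B w := by
  classical
  have hbR : (1:ℝ) ≤ (b:ℝ) := by exact_mod_cast hb
  have hs0pos : 0 < s0 := by nlinarith
  obtain ⟨S, hS1, hSb⟩ := exists_S b hb s0 hs0
  have hSpos : (0:ℝ) < S := by linarith
  have hsqS : 0 ≤ Real.sqrt S := Real.sqrt_nonneg S
  set c0 : ℝ := (1 + s0) ^ (s0 : ℝ) with hc0def
  have hc0 : 1 ≤ c0 := Real.one_le_rpow (by linarith) (le_of_lt hs0pos)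
  set K0 : ℝ := 4 * S * (3 + c0)^2 with hK0def
  have hK0_1 : (1:ℝ) ≤ K0 := by nlinarith
  have hK0pos : (0:ℝ) < K0 := by linarith
  have hsqK0 : 0 < Real.sqrt K0 := Real.sqrt_pos.2 hK0pos
  have hSsq : Real.sqrt S ^ 2 = S := Real.sq_sqrt (le_of_lt hSpos)
  have hvK : Real.sqrt K0 = 2 * Real.sqrt S * (3 + c0) := by
    rw [hK0def, show (4:ℝ) * S * (3 + c0)^2 = (2 * Real.sqrt S * (3 + c0))^2 by nlinarith]
    exact Real.sqrt_sq (by nlinarith)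
  refine ⟨K0, hK0_1, fun s => max 1 (2 * Real.sqrt S * (1 + s) ^ s / Real.sqrt K0),
    ?_, ?_, ?_⟩
  · apply max_eq_left
    rw [div_le_one hsqK0, hvK]
    nlinarith
  · intro s _; exact le_max_left _ _
  · intro s hs B C M w
    have hspos : 0 < s := lt_of_lt_of_le hs0pos hs
    have hcs : (0:ℝ) ≤ (1 + s) ^ s := Real.rpow_nonneg (by linarith) s
    have hK0nn : (0:ℝ) ≤ K0 := le_of_lt hK0pos
    rw [vNorm_eq K0 s hK0nn C (mVec B M w), vNorm_eq K0 s hK0nn B w,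
      vNorm_eq K0 s0 hK0nn B w, sNorm_eq K0 s hK0nn B C M, sNorm_eq K0 s0 hK0nn B C M]
    set Dex := ((C.image Prod.fst) ×ˢ (B.image Prod.fst)).image
      (fun p : (Fin b → ℤ) × (Fin b → ℤ) => p.1 - p.2) with hDdef
    set rhos : ℝ := Real.sqrt (∑ i ∈ C.image Prod.fst,
      (omg C (mVec B M w) i * (wt i : ℝ) ^ s)^2) with hrhos
    set nus : ℝ := Real.sqrt (∑ i ∈ B.image Prod.fst,
      (omg B w i * (wt i : ℝ) ^ s)^2) with hnus
    set nus0 : ℝ := Real.sqrt (∑ i ∈ B.image Prod.fst,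
      (omg B w i * (wt i : ℝ) ^ s0)^2) with hnus0
    set mus : ℝ := Real.sqrt (∑ n ∈ Dex,
      ((decayCoef B C M n : ℝ) * (wt n : ℝ) ^ s)^2) with hmus
    set mus0 : ℝ := Real.sqrt (∑ n ∈ Dex,
      ((decayCoef B C M n : ℝ) * (wt n : ℝ) ^ s0)^2) with hmus0
    have hnus_0 : 0 ≤ nus := Real.sqrt_nonneg _
    have hnus0_0 : 0 ≤ nus0 := Real.sqrt_nonneg _
    have hmus_0 : 0 ≤ mus := Real.sqrt_nonneg _
    have hmus0_0 : 0 ≤ mus0 := Real.sqrt_nonneg _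
    -- abbreviations (not occurring in the goal)
    have hD : ∀ i ∈ C.image Prod.fst, ∀ j ∈ B.image Prod.fst, i - j ∈ Dex := by
      intro i hi j hj
      exact Finset.mem_image.2 ⟨(i, j), Finset.mem_product.2 ⟨hi, hj⟩, rfl⟩
    have hmu0 : ∀ n : Fin b → ℤ, (0:ℝ) ≤ (decayCoef B C M n : ℝ) :=
      fun n => (decayCoef B C M n).coe_nonneg
    have homg0 : ∀ j : Fin b → ℤ, 0 ≤ omg B w j := fun j => omg_nonneg B w j
    set A : (Fin b → ℤ) → ℝ := fun i => ∑ j ∈ B.image Prod.fst,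
      (decayCoef B C M (i - j) : ℝ) * (omg B w j * (wt j : ℝ) ^ s) with hA
    set Bf : (Fin b → ℤ) → ℝ := fun i => ∑ j ∈ B.image Prod.fst,
      ((decayCoef B C M (i - j) : ℝ) * (wt (i - j) : ℝ) ^ s) * omg B w j with hBf
    -- Step A: the pointwise estimate
    have stepA : ∀ i ∈ C.image Prod.fst,
        omg C (mVec B M w) i * (wt i : ℝ) ^ s ≤ 3 * A i + (1 + s)^s * Bf i := by
      intro i hi
      have h1 := step1 B C M w i hi
      calc omg C (mVec B M w) i * (wt i : ℝ)^s
          ≤ (∑ j ∈ B.image Prod.fst, (decayCoef B C M (i - j) : ℝ) * omg B w j)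
              * (wt i : ℝ)^s :=
            mul_le_mul_of_nonneg_right h1 (Real.rpow_nonneg (le_of_lt (wt_pos i)) s)
        _ = ∑ j ∈ B.image Prod.fst,
              (decayCoef B C M (i - j) : ℝ) * omg B w j * (wt i : ℝ)^s :=
            Finset.sum_mul _ _ _
        _ ≤ ∑ j ∈ B.image Prod.fst,
              (3 * ((decayCoef B C M (i - j) : ℝ) * (omg B w j * (wt j : ℝ)^s))
              + (1 + s)^s * (((decayCoef B C M (i - j) : ℝ) * (wt (i - j) : ℝ)^s)
                  * omg B w j)) := by
            apply Finset.sum_le_sum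
            intro j _
            have hw := wt_interp hs0pos hs i j
            have hμω : 0 ≤ (decayCoef B C M (i - j) : ℝ) * omg B w j :=
              mul_nonneg (hmu0 _) (homg0 _)
            calc (decayCoef B C M (i - j) : ℝ) * omg B w j * (wt i : ℝ)^s
                ≤ (decayCoef B C M (i - j) : ℝ) * omg B w j
                    * (3 * (wt j : ℝ)^s + (1 + s)^s * (wt (i - j) : ℝ)^s) :=
                  mul_le_mul_of_nonneg_left hw hμω
              _ = 3 * ((decayCoef B C M (i - j) : ℝ) * (omg B w j * (wt j : ℝ)^s))
                  + (1 + s)^s * (((decayCoef B C M (i - j) : ℝ) * (wt (i - j) : ℝ)^s)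
                      * omg B w j) := by ring
        _ = 3 * A i + (1 + s)^s * Bf i := by
            rw [Finset.sum_add_distrib, ← Finset.mul_sum, ← Finset.mul_sum]
    -- Step B: Minkowski
    have stepB : rhos ≤ 3 * Real.sqrt (∑ i ∈ C.image Prod.fst, (A i)^2)
        + (1 + s)^s * Real.sqrt (∑ i ∈ C.image Prod.fst, (Bf i)^2) := by
      have hmono : ∑ i ∈ C.image Prod.fst, (omg C (mVec B M w) i * (wt i : ℝ)^s)^2
          ≤ ∑ i ∈ C.image Prod.fst, (3 * A i + (1 + s)^s * Bf i)^2 := by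
        apply Finset.sum_le_sum
        intro i hi
        apply pow_le_pow_left₀
          (mul_nonneg (omg_nonneg _ _ i) (Real.rpow_nonneg (le_of_lt (wt_pos i)) s))
          (stepA i hi)
      have hmink := sqrt_sum_sq_add_le (C.image Prod.fst)
        (fun i => 3 * A i) (fun i => (1 + s)^s * Bf i)
      have e1 : Real.sqrt (∑ i ∈ C.image Prod.fst, (3 * A i)^2)
          = 3 * Real.sqrt (∑ i ∈ C.image Prod.fst, (A i)^2) := by
        have e : ∑ i ∈ C.image Prod.fst, (3 * A i)^2
            = 3^2 * ∑ i ∈ C.image Prod.fst, (A i)^2 := by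
          rw [Finset.mul_sum]
          apply Finset.sum_congr rfl
          intro i _; ring
        rw [e, Real.sqrt_mul (by positivity) _, Real.sqrt_sq (by norm_num : (0:ℝ) ≤ 3)]
      have e2 : Real.sqrt (∑ i ∈ C.image Prod.fst, ((1 + s)^s * Bf i)^2)
          = (1 + s)^s * Real.sqrt (∑ i ∈ C.image Prod.fst, (Bf i)^2) := by
        have e : ∑ i ∈ C.image Prod.fst, ((1 + s)^s * Bf i)^2
            = ((1 + s)^s)^2 * ∑ i ∈ C.image Prod.fst, (Bf i)^2 := by
          rw [Finset.mul_sum]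
          apply Finset.sum_congr rfl
          intro i _; ring
        rw [e, Real.sqrt_mul (sq_nonneg _) _, Real.sqrt_sq hcs]
      calc rhos
          ≤ Real.sqrt (∑ i ∈ C.image Prod.fst, (3 * A i + (1 + s)^s * Bf i)^2) := by
            rw [hrhos]; exact Real.sqrt_le_sqrt hmono
        _ ≤ Real.sqrt (∑ i ∈ C.image Prod.fst, (3 * A i)^2)
            + Real.sqrt (∑ i ∈ C.image Prod.fst, ((1 + s)^s * Bf i)^2) := hmink
        _ = 3 * Real.sqrt (∑ i ∈ C.image Prod.fst, (A i)^2)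
            + (1 + s)^s * Real.sqrt (∑ i ∈ C.image Prod.fst, (Bf i)^2) := by rw [e1, e2]
    -- Step C,D: bound on the A part
    have hL0 : 0 ≤ ∑ n ∈ Dex, (decayCoef B C M n : ℝ) :=
      Finset.sum_nonneg fun n _ => hmu0 n
    have stepC : Real.sqrt (∑ i ∈ C.image Prod.fst, (A i)^2)
        ≤ (∑ n ∈ Dex, (decayCoef B C M n : ℝ)) * nus := by
      have hconv := conv_l2_l1 (C.image Prod.fst) (B.image Prod.fst)
        (fun n => (decayCoef B C M n : ℝ)) (fun j => omg B w j * (wt j : ℝ)^s) hmu0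
        (∑ n ∈ Dex, (decayCoef B C M n : ℝ)) hL0
        (fun i hi => sum_shift_left _ _ Dex hD _ hmu0 i hi)
        (fun j hj => sum_shift_right _ _ Dex hD _ hmu0 j hj)
      calc Real.sqrt (∑ i ∈ C.image Prod.fst, (A i)^2)
          ≤ Real.sqrt ((∑ n ∈ Dex, (decayCoef B C M n : ℝ))^2
              * ∑ j ∈ B.image Prod.fst, (omg B w j * (wt j : ℝ)^s)^2) :=
            Real.sqrt_le_sqrt hconv
        _ = (∑ n ∈ Dex, (decayCoef B C M n : ℝ)) * nus := by
            rw [Real.sqrt_mul (sq_nonneg _), Real.sqrt_sq hL0, hnus]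
    have stepD : ∑ n ∈ Dex, (decayCoef B C M n : ℝ) ≤ Real.sqrt S * mus0 := by
      rw [hmus0]
      exact l1_bound s0 S hSb Dex _ hmu0
    -- Step E: bound on the B part
    have stepE : Real.sqrt (∑ i ∈ C.image Prod.fst, (Bf i)^2)
        ≤ (Real.sqrt S * nus0) * mus := by
      have hF : ∑ j ∈ B.image Prod.fst, omg B w j ≤ Real.sqrt S * nus0 := by
        rw [hnus0]
        exact l1_bound s0 S hSb _ _ homg0
      have hE : ∀ j ∈ B.image Prod.fst, ∑ i ∈ C.image Prod.fst,
          ((fun n => (decayCoef B C M n : ℝ) * (wt n : ℝ)^s) (i - j))^2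
          ≤ ∑ n ∈ Dex, ((decayCoef B C M n : ℝ) * (wt n : ℝ)^s)^2 := by
        intro j hj
        exact sum_shift_right _ _ Dex hD
          (fun n => ((decayCoef B C M n : ℝ) * (wt n : ℝ)^s)^2)
          (fun n => sq_nonneg _) j hj
      have hconv := conv_l1_l2 (C.image Prod.fst) (B.image Prod.fst)
        (fun n => (decayCoef B C M n : ℝ) * (wt n : ℝ)^s) (fun j => omg B w j) homg0
        (Real.sqrt S * nus0) (∑ n ∈ Dex, ((decayCoef B C M n : ℝ) * (wt n : ℝ)^s)^2)
        (mul_nonneg hsqS hnus0_0)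
        (Finset.sum_nonneg fun n _ => sq_nonneg _) hF hE
      calc Real.sqrt (∑ i ∈ C.image Prod.fst, (Bf i)^2)
          ≤ Real.sqrt ((Real.sqrt S * nus0)^2
              * ∑ n ∈ Dex, ((decayCoef B C M n : ℝ) * (wt n : ℝ)^s)^2) :=
            Real.sqrt_le_sqrt hconv
        _ = (Real.sqrt S * nus0) * mus := by
            rw [Real.sqrt_mul (sq_nonneg _), Real.sqrt_sq (mul_nonneg hsqS hnus0_0), hmus]
    -- combine
    have key : rhos ≤ 3 * (Real.sqrt S * mus0) * nus
        + (1 + s)^s * ((Real.sqrt S * nus0) * mus) := by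
      have c1 : Real.sqrt (∑ i ∈ C.image Prod.fst, (A i)^2)
          ≤ (Real.sqrt S * mus0) * nus :=
        stepC.trans (mul_le_mul_of_nonneg_right stepD hnus_0)
      have c2 : (1 + s)^s * Real.sqrt (∑ i ∈ C.image Prod.fst, (Bf i)^2)
          ≤ (1 + s)^s * ((Real.sqrt S * nus0) * mus) :=
        mul_le_mul_of_nonneg_left stepE hcs
      have c1' : 3 * Real.sqrt (∑ i ∈ C.image Prod.fst, (A i)^2)
          ≤ 3 * ((Real.sqrt S * mus0) * nus) := by linarith only [c1]
      linarith only [stepB, c1', c2]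
    -- final arithmetic
    have hKsq : Real.sqrt K0 * Real.sqrt K0 = K0 := Real.mul_self_sqrt hK0nn
    have hss : Real.sqrt S * Real.sqrt S = S := Real.mul_self_sqrt (le_of_lt hSpos)
    have hcoef1 : 3 * Real.sqrt S * Real.sqrt K0 ≤ K0 / 2 := by
      have hub : (0:ℝ) ≤ 2 * S * (3 + c0) * c0 :=
        mul_nonneg (mul_nonneg (mul_nonneg (by norm_num) (le_of_lt hSpos))
          (by linarith only [hc0])) (by linarith only [hc0])
      calc 3 * Real.sqrt S * Real.sqrt K0
          = 6 * (Real.sqrt S * Real.sqrt S) * (3 + c0) := by rw [hvK]; ring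
        _ = 6 * S * (3 + c0) := by rw [hss]
        _ ≤ 2 * S * (3 + c0)^2 := by
            have expand : 2 * S * (3 + c0)^2
                = 6 * S * (3 + c0) + 2 * S * (3 + c0) * c0 := by ring
            rw [expand]
            linarith only [hub]
        _ = K0 / 2 := by rw [hK0def]; ring
    have hcoef2 : (1 + s)^s * Real.sqrt S * Real.sqrt K0
        ≤ (max 1 (2 * Real.sqrt S * (1 + s) ^ s / Real.sqrt K0)) * K0 / 2 := by
      have h1 : 2 * Real.sqrt S * (1 + s) ^ s / Real.sqrt K0
          ≤ max 1 (2 * Real.sqrt S * (1 + s) ^ s / Real.sqrt K0) := le_max_right _ _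
      have h2 : (2 * Real.sqrt S * (1 + s) ^ s / Real.sqrt K0) * K0 / 2
          ≤ (max 1 (2 * Real.sqrt S * (1 + s) ^ s / Real.sqrt K0)) * K0 / 2 := by
        apply div_le_div_of_nonneg_right _ (by norm_num)
        exact mul_le_mul_of_nonneg_right h1 hK0nn
      have h3 : (2 * Real.sqrt S * (1 + s) ^ s / Real.sqrt K0) * K0 / 2
          = (1 + s)^s * Real.sqrt S * (K0 / Real.sqrt K0) := by ring
      have h4 : K0 / Real.sqrt K0 = Real.sqrt K0 := Real.div_sqrt
      calc (1 + s)^s * Real.sqrt S * Real.sqrt K0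
          = (2 * Real.sqrt S * (1 + s) ^ s / Real.sqrt K0) * K0 / 2 := by rw [h3, h4]
        _ ≤ _ := h2
    calc Real.sqrt K0 * rhos
        ≤ Real.sqrt K0 * (3 * (Real.sqrt S * mus0) * nus
            + (1 + s)^s * ((Real.sqrt S * nus0) * mus)) :=
          mul_le_mul_of_nonneg_left key (Real.sqrt_nonneg _)
      _ = (3 * Real.sqrt S * Real.sqrt K0) * (mus0 * nus)
          + ((1 + s)^s * Real.sqrt S * Real.sqrt K0) * (mus * nus0) := by ring
      _ ≤ (K0 / 2) * (mus0 * nus)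
          + ((max 1 (2 * Real.sqrt S * (1 + s) ^ s / Real.sqrt K0)) * K0 / 2)
              * (mus * nus0) := by
          apply add_le_add
          · exact mul_le_mul_of_nonneg_right hcoef1 (mul_nonneg hmus0_0 hnus_0)
          · exact mul_le_mul_of_nonneg_right hcoef2 (mul_nonneg hmus_0 hnus0_0)
      _ = 1 / 2 * (Real.sqrt K0 * mus0) * (Real.sqrt K0 * nus)
          + (max 1 (2 * Real.sqrt S * (1 + s) ^ s / Real.sqrt K0)) / 2
              * (Real.sqrt K0 * mus) * (Real.sqrt K0 * nus0) := by
          linear_combination (-(mus0 * nus / 2)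
            - (max 1 (2 * Real.sqrt S * (1 + s) ^ s / Real.sqrt K0)) * (mus * nus0) / 2) * hKsq

end NLSPaper
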